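/- Let m ≥ 2 be an integer, α > 0 a real number, and set t̂ = arctan(√(α/(m−1))). Suppose γ is a real number with 0 < γ < 1 − 1/(m+α) such that γ·g_{m,α}'(t) ≤ H_{m,α}(t, γ·g_{m,α}(t)) for all t ∈ (0, t̂). Then there exists a differentiable function w : (0, t̂) → ℝ satisfying w'(t) = H_{m,α}(t, w(t)) and 0 < γ·g_{m,α}(t) ≤ w(t) ≤ g_{m,α}(t) for all t ∈ (0, t̂), with w(t) → 0 as t → 0⁺ and w(t) → +∞ as t → t̂⁻. -/

import Mathlib

open Set Filter Topology Function Real Metric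
open scoped NNReal

/-!
With `g = gUpper m α`, one has `H(t, y) = (m + α)(1 + y²)(1 - y / g(t))` on `(0, t̂)`, so `g` is an
increasing exact solution, hence an upper solution, while `γ g` is a lower solution by hypothesis.
On a compact `[τ, t̂ - τ]` the field is Lipschitz on the strip between them; Picard–Lindelöf for
the field clamped to that strip plus a one-sided comparison principle yield a solution `f_τ`
starting on `γ g` at `τ` and trapped between `γ g` and `g`. By comparison the `f_τ` increase as
`τ ↓ 0`, and their supremum `w` inherits the bounds, which force both boundary limits. Finally
`w` solves the equation: the `f_τ` are locally equi-Lipschitz, so `H(t, f_τ(t))` converges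
uniformly near each point and the derivative passes to the limit.
-/

/-- The right-hand side `H_{m,α}(t,w)` of the first-order ODE for `w = v̇`. -/
noncomputable def Hrhs (m : ℕ) (α : ℝ) (t w : ℝ) : ℝ :=
  (1 + w ^ 2) *
    ((m : ℝ) + α +
      (((m : ℝ) - α - 1 - ((m : ℝ) + α - 1) * Real.cos (2 * t)) / Real.sin (2 * t)) * w)

/-- The explicit upper solution `g_{m,α}(t)`. -/
noncomputable def gUpper (m : ℕ) (α : ℝ) (t : ℝ) : ℝ :=
  ((m : ℝ) + α) * Real.sin (2 * t) /
    (((m : ℝ) + α - 1) * Real.cos (2 * t) - ((m : ℝ) - α - 1))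

/-- The cone angle `t̂ = arctan √(α/(m−1))`. -/
noncomputable def tHat (m : ℕ) (α : ℝ) : ℝ :=
  Real.arctan (Real.sqrt (α / ((m : ℝ) - 1)))

section ODE

variable {a b : ℝ}

theorem image_le_of_deriv_sub_le_mul_sub {f g f' g' : ℝ → ℝ} {L : ℝ}
    (hf : ∀ x ∈ Icc a b, HasDerivWithinAt f (f' x) (Icc a b) x)
    (hg : ∀ x ∈ Icc a b, HasDerivWithinAt g (g' x) (Icc a b) x) (ha : f a ≤ g a)
    (bound : ∀ x ∈ Ico a b, g x ≤ f x → f' x - g' x ≤ L * (f x - g x)) :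
    ∀ x ∈ Icc a b, f x ≤ g x := by
  set h : ℝ → ℝ := fun x => (f x - g x) * exp (-L * x)
  have hh : ∀ x ∈ Icc a b, HasDerivWithinAt h
      ((f' x - g' x - L * (f x - g x)) * exp (-L * x)) (Icc a b) x := fun x hx => by
    refine (((hf x hx).sub (hg x hx)).mul
      ((hasDerivWithinAt_id x _).const_mul (-L)).exp).congr_deriv ?_
    simp only [id, Pi.sub_apply]; ring
  intro x hx
  suffices h x ≤ 0 from sub_nonpos.1 (nonpos_of_mul_nonpos_left this (exp_pos _))
  -- `h` cannot cross any positive barrier `ε e^{y - x}`, since `h' ≤ 0` wherever `h > 0`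
  refine le_of_forall_pos_le_add fun ε hε => ?_
  have := image_le_of_deriv_right_lt_deriv_boundary (a := a) (b := b) (f := h)
    (B := fun y => ε * exp (y - x)) (B' := fun y => ε * exp (y - x))
    (fun y hy => (hh y hy).continuousWithinAt)
    (fun y hy => (hh y (Ico_subset_Icc_self hy)).mono_of_mem_nhdsWithin
      (Icc_mem_nhdsGE_of_mem hy))
    ((mul_nonpos_of_nonpos_of_nonneg (sub_nonpos.2 ha) (exp_pos _).le).trans
      (by positivity))
    (fun y => by simpa using ((hasDerivAt_id y).sub_const x).exp.const_mul ε)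
    (fun y hy hyB => by
      have hpos : 0 < f y - g y := pos_of_mul_pos_left (hyB.trans_gt (by positivity))
        (exp_pos _).le
      have hy' := bound y hy (sub_nonneg.1 hpos.le)
      nlinarith [exp_pos (-L * y), exp_pos (y - x)])
    hx
  simpa using this

theorem LipschitzOnWith.sub_le_mul_sub {f : ℝ → ℝ} {K : ℝ≥0} {s : Set ℝ}
    (hf : LipschitzOnWith K f s) {x y : ℝ} (hx : x ∈ s) (hy : y ∈ s) (hxy : y ≤ x) :
    f x - f y ≤ K * (x - y) := by
  have := hf.dist_le_mul x hx y hy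
  rw [dist_eq, dist_eq, abs_of_nonneg (sub_nonneg.2 hxy)] at this
  exact (le_abs_self _).trans this

theorem ODE_solution_le_of_mem_Icc {F : ℝ → ℝ → ℝ} {f g : ℝ → ℝ} {s : Set ℝ} {K : ℝ≥0}
    (hF : ∀ t ∈ Ico a b, LipschitzOnWith K (F t) s)
    (hf : ∀ t ∈ Icc a b, HasDerivWithinAt f (F t (f t)) (Icc a b) t)
    (hg : ∀ t ∈ Icc a b, HasDerivWithinAt g (F t (g t)) (Icc a b) t)
    (hfs : ∀ t ∈ Ico a b, f t ∈ s) (hgs : ∀ t ∈ Ico a b, g t ∈ s) (ha : f a ≤ g a) :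
    ∀ t ∈ Icc a b, f t ≤ g t :=
  image_le_of_deriv_sub_le_mul_sub hf hg ha fun t ht hgf =>
    (hF t ht).sub_le_mul_sub (hfs t ht) (hgs t ht) hgf

theorem exists_hasDerivWithinAt_mem_Icc_of_lower_upper {F : ℝ → ℝ → ℝ} {l u l' u' : ℝ → ℝ}
    {M : ℝ} {K : ℝ≥0} (hab : a ≤ b)
    (hF : ∀ y ∈ Icc (-M) M, ContinuousOn (F · y) (Icc a b))
    (hFK : ∀ t ∈ Icc a b, LipschitzOnWith K (F t) (Icc (-M) M))
    (hl : ∀ t ∈ Icc a b, HasDerivWithinAt l (l' t) (Icc a b) t)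
    (hu : ∀ t ∈ Icc a b, HasDerivWithinAt u (u' t) (Icc a b) t)
    (hlF : ∀ t ∈ Icc a b, l' t ≤ F t (l t)) (huF : ∀ t ∈ Icc a b, F t (u t) ≤ u' t)
    (hlM : ∀ t ∈ Icc a b, l t ∈ Icc (-M) M) (huM : ∀ t ∈ Icc a b, u t ∈ Icc (-M) M)
    {x₀ : ℝ} (hx₀ : x₀ ∈ Icc (l a) (u a)) :
    ∃ f : ℝ → ℝ, f a = x₀ ∧ ∀ t ∈ Icc a b,
      HasDerivWithinAt f (F t (f t)) (Icc a b) t ∧ f t ∈ Icc (l t) (u t) := by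
  have haI : a ∈ Icc a b := left_mem_Icc.2 hab
  have hM : -M ≤ M := (hlM a haI).1.trans (hlM a haI).2
  -- Clamping the unknown to `[-M, M]` makes the field globally Lipschitz and bounded.
  set c : ℝ → ℝ := fun y => projIcc (-M) M hM y
  have hc : ∀ y, c y ∈ Icc (-M) M := fun y => (projIcc (-M) M hM y).2
  have hc_eq : ∀ y ∈ Icc (-M) M, c y = y := fun y hy => by simp [c, projIcc_of_mem hM hy]
  set G : ℝ → ℝ → ℝ := fun t y => F t (c y)
  have hGK : ∀ t ∈ Icc a b, LipschitzWith K (G t) := fun t ht => by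
    have := (hFK t ht).comp ((LipschitzWith.subtype_val _).comp
      (LipschitzWith.projIcc hM)).lipschitzOnWith (s := univ) (fun y _ => hc y)
    simpa [G, c, comp_def] using this
  obtain ⟨B, hB⟩ := isCompact_Icc.exists_bound_of_continuousOn (hF 0 ⟨by linarith, by linarith⟩)
  have hGB : ∀ t ∈ Icc a b, ∀ y, ‖G t y‖ ≤ B + K * M := fun t ht y => by
    have h1 := (hFK t ht).dist_le_mul (c y) (hc y) 0 ⟨by linarith, by linarith⟩
    have h2 : dist (c y) 0 ≤ M := by rw [dist_zero_right, norm_eq_abs, abs_le]; exact hc y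
    rw [dist_eq_norm] at h1
    calc ‖G t y‖ ≤ ‖F t 0‖ + ‖F t (c y) - F t 0‖ := norm_le_norm_add_norm_sub' _ _
      _ ≤ B + K * M := add_le_add (hB t ht) (h1.trans (mul_le_mul_of_nonneg_left h2 K.2))
  have hPL : IsPicardLindelof G (t₀ := ⟨a, haI⟩) x₀ ((B + K * M) * (b - a)).toNNReal 0
      (B + K * M).toNNReal K := by
    have hB0 : 0 ≤ B + K * M := (norm_nonneg _).trans (hGB a haI 0)
    refine ⟨fun t ht => (hGK t ht).lipschitzOnWith, fun y _ => hF (c y) (hc y),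
      fun t ht y _ => ?_, ?_⟩
    · simpa [Real.coe_toNNReal _ hB0] using hGB t ht y
    · simp [Real.coe_toNNReal _ hB0, sub_nonneg.2 hab]
  obtain ⟨f, hfa, hf⟩ := hPL.exists_eq_forall_mem_Icc_hasDerivWithinAt₀
  have hlf : ∀ t ∈ Icc a b, l t ≤ f t := by
    refine image_le_of_deriv_sub_le_mul_sub (L := K) hl hf (hfa ▸ hx₀.1) fun t ht hft => ?_
    have := (hGK t (Ico_subset_Icc_self ht)).lipschitzOnWith.sub_le_mul_sub (mem_univ _)
      (mem_univ _) hft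
    simp only [G, hc_eq _ (hlM t (Ico_subset_Icc_self ht))] at this ⊢
    linarith [hlF t (Ico_subset_Icc_self ht)]
  have hfu : ∀ t ∈ Icc a b, f t ≤ u t := by
    refine image_le_of_deriv_sub_le_mul_sub (L := K) hf hu (hfa ▸ hx₀.2) fun t ht hft => ?_
    have := (hGK t (Ico_subset_Icc_self ht)).lipschitzOnWith.sub_le_mul_sub (mem_univ _)
      (mem_univ _) hft
    simp only [G, hc_eq _ (huM t (Ico_subset_Icc_self ht))] at this ⊢
    linarith [huF t (Ico_subset_Icc_self ht)]
  refine ⟨f, hfa, fun t ht => ⟨?_, hlf t ht, hfu t ht⟩⟩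
  have := hf t ht
  rwa [show G t (f t) = F t (f t) from congrArg (F t)
    (hc_eq _ ⟨(hlM t ht).1.trans (hlf t ht), (hfu t ht).trans (huM t ht).2⟩)] at this

theorem hasDerivAt_of_tendsto_of_hasDerivAt {F : ℝ → ℝ → ℝ} {f : ℕ → ℝ → ℝ} {w : ℝ → ℝ}
    {s : Set ℝ} {t C : ℝ} (hs : s ∈ 𝓝 t) (hF : ContinuousAt (uncurry F) (t, w t))
    (hf : ∀ᶠ n in atTop, ∀ r ∈ s, HasDerivAt (f n) (F r (f n r)) r ∧ |F r (f n r)| ≤ C)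
    (hfw : ∀ᶠ r in 𝓝 t, Tendsto (fun n => f n r) atTop (𝓝 (w r))) :
    HasDerivAt w (F t (w t)) t := by
  obtain ⟨ρ, hρ, hball⟩ := Metric.mem_nhds_iff.1 hs
  have hlip : ∀ᶠ n in atTop, ∀ r ∈ ball t ρ, |f n r - f n t| ≤ C * |r - t| := by
    filter_upwards [hf] with n hn r hr
    simpa using (convex_ball t ρ).norm_image_sub_le_of_norm_hasDerivWithin_le
      (fun x hx => (hn x (hball hx)).1.hasDerivWithinAt) (fun x hx => (hn x (hball hx)).2)
      (mem_ball_self hρ) hr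
  -- equi-Lipschitz near `t` upgrades pointwise convergence at `t` to joint convergence
  have hjoint : Tendsto (fun p : ℕ × ℝ => f p.1 p.2) (atTop ×ˢ 𝓝 t) (𝓝 (w t)) := by
    rw [tendsto_iff_dist_tendsto_zero]
    refine squeeze_zero' (Eventually.of_forall fun _ => dist_nonneg)
      ((hlip.prod_mk (ball_mem_nhds t hρ)).mono fun p ⟨hp, hr⟩ => ?_)
      (g := fun p => C * |p.2 - t| + |f p.1 t - w t|) ?_
    · rw [dist_eq]
      calc |f p.1 p.2 - w t| ≤ |f p.1 p.2 - f p.1 t| + |f p.1 t - w t| := abs_sub_le _ _ _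
        _ ≤ _ := by gcongr; exact hp _ hr
    · have h1 : Tendsto (fun r => C * |r - t|) (𝓝 t) (𝓝 0) := by
        simpa using ((continuous_id.sub continuous_const).abs.const_mul C).tendsto (x := t)
          (f := fun r => C * |r - t|)
      have h2 : Tendsto (fun n => |f n t - w t|) atTop (𝓝 0) := by
        simpa using (hfw.self_of_nhds.sub_const (w t)).abs
      simpa using (h1.comp tendsto_snd).add (h2.comp tendsto_fst)
  refine hasDerivAt_of_tendstoUniformlyOnFilter (f' := fun n r => F r (f n r))
    (g' := fun _ => F t (w t)) ?_ ?_ hfw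
  · exact Uniform.tendsto_nhds_right.1 (hF.tendsto.comp (tendsto_snd.prodMk_nhds hjoint))
  · exact (hf.prod_mk hs).mono fun p ⟨hp, hr⟩ => (hp p.2 hr).1

end ODE

noncomputable def gDenom (m : ℕ) (α t : ℝ) : ℝ :=
  ((m : ℝ) + α - 1) * cos (2 * t) - ((m : ℝ) - α - 1)

section Cone

variable {m : ℕ} {α : ℝ}

theorem tHat_lt_pi_div_two : tHat m α < π / 2 := arctan_lt_pi_div_two _

theorem sin_two_mul_pos {t : ℝ} (ht : t ∈ Ioo 0 (tHat m α)) : 0 < sin (2 * t) :=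
  sin_pos_of_pos_of_lt_pi (by linarith [ht.1])
    (by linarith [ht.2, tHat_lt_pi_div_two (m := m) (α := α)])

theorem continuousOn_Hrhs : ContinuousOn (uncurry (Hrhs m α)) (Ioo 0 (tHat m α) ×ˢ univ) := by
  unfold Hrhs uncurry
  refine ContinuousOn.mul (by fun_prop) (ContinuousOn.add (by fun_prop)
    (ContinuousOn.mul (ContinuousOn.div (by fun_prop) (by fun_prop) ?_) (by fun_prop)))
  exact fun p hp => (sin_two_mul_pos hp.1).ne'

theorem hasDerivAt_gUpper {t : ℝ} (ht : gDenom m α t ≠ 0) :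
    HasDerivAt (gUpper m α)
      (2 * (m + α) * ((m + α - 1) - (m - α - 1) * cos (2 * t)) / gDenom m α t ^ 2) t := by
  have h2 : HasDerivAt (fun t : ℝ => 2 * t) 2 t := by simpa using (hasDerivAt_id t).const_mul 2
  have := ((h2.sin.const_mul ((m : ℝ) + α)).div
    ((h2.cos.const_mul ((m : ℝ) + α - 1)).sub_const ((m : ℝ) - α - 1)) ht)
  refine this.congr_deriv ?_
  rw [gDenom]
  congr 1
  linear_combination (2 * ((m : ℝ) + α) * (m + α - 1)) * sin_sq_add_cos_sq (2 * t)

variable (hm : 2 ≤ m) (hα : 0 < α)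
include hm hα

theorem tHat_pos : 0 < tHat m α := by
  have : (0 : ℝ) < m - 1 := by linarith [show (2 : ℝ) ≤ m by exact_mod_cast hm]
  exact arctan_pos.2 (sqrt_pos.2 (div_pos hα this))

theorem gDenom_tHat : gDenom m α (tHat m α) = 0 := by
  have hm1 : (0 : ℝ) < m - 1 := by linarith [show (2 : ℝ) ≤ m by exact_mod_cast hm]
  have hcos : cos (tHat m α) ^ 2 = (m - 1) / (m - 1 + α) := by
    rw [tHat, cos_sq_arctan, sq_sqrt (div_pos hα hm1).le]
    field_simp
  rw [gDenom, cos_two_mul, hcos]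
  field_simp
  ring

theorem gDenom_pos {t : ℝ} (ht₀ : 0 ≤ t) (ht : t < tHat m α) : 0 < gDenom m α t := by
  have hma : (0 : ℝ) < m + α - 1 := by linarith [show (2 : ℝ) ≤ m by exact_mod_cast hm]
  have hcos : cos (2 * tHat m α) < cos (2 * t) :=
    cos_lt_cos_of_nonneg_of_le_pi (by linarith)
      (by linarith [tHat_lt_pi_div_two (m := m) (α := α)]) (by linarith)
  have := gDenom_tHat hm hα
  simp only [gDenom] at this ⊢
  nlinarith

theorem gUpper_pos {t : ℝ} (ht : t ∈ Ioo 0 (tHat m α)) : 0 < gUpper m α t := by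
  have := gDenom_pos hm hα ht.1.le ht.2
  have := sin_two_mul_pos ht
  have : (0 : ℝ) < m + α := by positivity
  rw [gUpper]; unfold gDenom at *; positivity

theorem Hrhs_eq {t : ℝ} (ht : t ∈ Ioo 0 (tHat m α)) (y : ℝ) :
    Hrhs m α t y = (m + α) * (1 + y ^ 2) * (1 - y / gUpper m α t) := by
  have := gDenom_pos hm hα ht.1.le ht.2
  have := sin_two_mul_pos ht
  have : (0 : ℝ) < m + α := by positivity
  unfold gDenom at *
  rw [Hrhs, gUpper]
  field_simp
  ring

theorem hasDerivAt_gUpper_deriv {t : ℝ} (ht : t ∈ Ioo 0 (tHat m α)) :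
    HasDerivAt (gUpper m α) (deriv (gUpper m α) t) t :=
  (hasDerivAt_gUpper (gDenom_pos hm hα ht.1.le ht.2).ne').differentiableAt.hasDerivAt

theorem deriv_gUpper_nonneg {t : ℝ} (ht : t ∈ Ioo 0 (tHat m α)) :
    0 ≤ deriv (gUpper m α) t := by
  rw [(hasDerivAt_gUpper (gDenom_pos hm hα ht.1.le ht.2).ne').deriv]
  have : (2 : ℝ) ≤ m := by exact_mod_cast hm
  have := neg_one_le_cos (2 * t)
  have := cos_le_one (2 * t)
  have : 0 ≤ (m + α - 1) - (m - α - 1) * cos (2 * t) := by nlinarith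
  positivity

theorem monotoneOn_gUpper : MonotoneOn (gUpper m α) (Ioo 0 (tHat m α)) := by
  refine monotoneOn_of_deriv_nonneg (convex_Ioo _ _)
    (fun t ht => (hasDerivAt_gUpper_deriv hm hα ht).continuousAt.continuousWithinAt)
    (fun t ht => ?_) fun t ht => ?_ <;> rw [interior_Ioo] at ht
  · exact (hasDerivAt_gUpper_deriv hm hα ht).differentiableAt.differentiableWithinAt
  · exact deriv_gUpper_nonneg hm hα ht

theorem tendsto_gUpper_nhdsGT_zero : Tendsto (gUpper m α) (𝓝[>] 0) (𝓝 0) := by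
  have := (hasDerivAt_gUpper (gDenom_pos hm hα le_rfl (tHat_pos hm hα)).ne').continuousAt
  simpa [gUpper] using this.tendsto.mono_left nhdsWithin_le_nhds

theorem tendsto_gUpper_nhdsLT_tHat : Tendsto (gUpper m α) (𝓝[<] tHat m α) atTop := by
  have hth := tHat_pos hm hα
  have hN : Tendsto (fun t => (m + α) * sin (2 * t)) (𝓝[<] tHat m α)
      (𝓝 ((m + α) * sin (2 * tHat m α))) :=
    ((by fun_prop : Continuous fun t : ℝ => (m + α) * sin (2 * t)).tendsto _).mono_left
      nhdsWithin_le_nhds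
  have hD : Tendsto (gDenom m α) (𝓝[<] tHat m α) (𝓝[>] 0) := by
    refine tendsto_nhdsWithin_iff.2 ⟨?_, ?_⟩
    · rw [← gDenom_tHat hm hα]
      exact ((by unfold gDenom; fun_prop : Continuous (gDenom m α)).tendsto _).mono_left
        nhdsWithin_le_nhds
    · filter_upwards [Ioo_mem_nhdsLT hth] with t ht
      exact gDenom_pos hm hα ht.1.le ht.2
  have hsin : 0 < sin (2 * tHat m α) :=
    sin_pos_of_pos_of_lt_pi (by linarith) (by linarith [tHat_lt_pi_div_two (m := m) (α := α)])
  exact (hN.pos_mul_atTop (by positivity) (tendsto_inv_nhdsGT_zero.comp hD)).congr fun t => by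
    simp [gUpper, gDenom, div_eq_mul_inv]

theorem Hrhs_gUpper {t : ℝ} (ht : t ∈ Ioo 0 (tHat m α)) : Hrhs m α t (gUpper m α t) = 0 := by
  rw [Hrhs_eq hm hα ht, div_self (gUpper_pos hm hα ht).ne', sub_self, mul_zero]

theorem abs_Hrhs_le {t b y : ℝ} (ht : t ∈ Ioo 0 (tHat m α)) (htb : t ≤ b) (hb : b < tHat m α)
    (hy : y ∈ Icc 0 (gUpper m α t)) :
    |Hrhs m α t y| ≤ (m + α) * (1 + gUpper m α b ^ 2) := by
  have hg := gUpper_pos hm hα ht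
  have hgb := monotoneOn_gUpper hm hα ht ⟨ht.1.trans_le htb, hb⟩ htb
  have : (0 : ℝ) < m + α := by positivity
  have h1 : y / gUpper m α t ≤ 1 := (div_le_one hg).2 hy.2
  have h2 : 0 ≤ y / gUpper m α t := div_nonneg hy.1 hg.le
  rw [Hrhs_eq hm hα ht, abs_of_nonneg (by have := sub_nonneg.2 h1; positivity)]
  calc (m + α) * (1 + y ^ 2) * (1 - y / gUpper m α t) ≤ (m + α) * (1 + y ^ 2) :=
        mul_le_of_le_one_right (by positivity) (by linarith)
    _ ≤ (m + α) * (1 + gUpper m α b ^ 2) := by gcongr; exacts [hy.1, hy.2.trans hgb]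

theorem lipschitzOnWith_Hrhs {a b : ℝ} (ha : 0 < a) (hb : b < tHat m α) (M : ℝ) :
    ∃ K : ℝ≥0, ∀ t ∈ Icc a b, LipschitzOnWith K (Hrhs m α t) (Icc (-M) M) := by
  refine ⟨((m + α) * (2 * M + (1 + 3 * M ^ 2) / gUpper m α a)).toNNReal, fun t ht => ?_⟩
  have htJ : t ∈ Ioo 0 (tHat m α) := ⟨ha.trans_le ht.1, ht.2.trans_lt hb⟩
  have haJ : a ∈ Ioo 0 (tHat m α) := ⟨ha, ht.1.trans_lt htJ.2⟩
  have hga := gUpper_pos hm hα haJ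
  have hgt := monotoneOn_gUpper hm hα haJ htJ ht.1
  have hma : (0 : ℝ) < m + α := by positivity
  refine LipschitzOnWith.of_dist_le_mul fun x hx y hy => ?_
  have hx' := abs_le.2 hx
  have hy' := abs_le.2 hy
  have hM : 0 ≤ M := (abs_nonneg x).trans hx'
  have hx2 : x ^ 2 ≤ M ^ 2 := by simpa [sq_abs] using pow_le_pow_left₀ (abs_nonneg x) hx' 2
  have hy2 : y ^ 2 ≤ M ^ 2 := by simpa [sq_abs] using pow_le_pow_left₀ (abs_nonneg y) hy' 2
  have hxy : x * y ≤ M ^ 2 := by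
    nlinarith [le_abs_self (x * y), abs_mul x y, mul_le_mul hx' hy' (abs_nonneg y) hM]
  set P := 1 + x ^ 2 + x * y + y ^ 2
  have hP : 0 ≤ P := by nlinarith [sq_nonneg (x + y)]
  have hP' : P ≤ 1 + 3 * M ^ 2 := by linarith
  have hPg : P / gUpper m α t ≤ (1 + 3 * M ^ 2) / gUpper m α a :=
    div_le_div₀ (hP.trans hP') hP' hga hgt
  have hq : |(x + y) - P / gUpper m α t| ≤ 2 * M + (1 + 3 * M ^ 2) / gUpper m α a := by
    rw [abs_le]
    constructor <;> nlinarith [div_nonneg hP (hga.trans_le hgt).le, abs_le.1 hx', abs_le.1 hy']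
  have key : Hrhs m α t x - Hrhs m α t y = (m + α) * ((x + y) - P / gUpper m α t) * (x - y) := by
    rw [Hrhs_eq hm hα htJ, Hrhs_eq hm hα htJ]
    field_simp
    ring
  rw [dist_eq, dist_eq, key, abs_mul, abs_mul, abs_of_pos hma,
    Real.coe_toNNReal _ (by positivity [(abs_nonneg _).trans hq])]
  gcongr

end Cone

section Squeeze

variable {m : ℕ} {α γ : ℝ} (hm : 2 ≤ m) (hα : 0 < α) (hγ0 : 0 < γ)
include hm hα hγ0

theorem exists_squeezed_solution_Icc (hγ1 : γ ≤ 1)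
    (hlow : ∀ t ∈ Ioo 0 (tHat m α), γ * deriv (gUpper m α) t ≤ Hrhs m α t (γ * gUpper m α t))
    {a b : ℝ} (ha : 0 < a) (hab : a ≤ b) (hb : b < tHat m α) :
    ∃ f : ℝ → ℝ, f a = γ * gUpper m α a ∧ ∀ t ∈ Icc a b,
      HasDerivWithinAt f (Hrhs m α t (f t)) (Icc a b) t ∧
        f t ∈ Icc (γ * gUpper m α t) (gUpper m α t) := by
  have hJ : ∀ t ∈ Icc a b, t ∈ Ioo 0 (tHat m α) := fun t ht =>
    ⟨ha.trans_le ht.1, ht.2.trans_lt hb⟩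
  have hg := fun t ht => hasDerivAt_gUpper_deriv hm hα (hJ t ht)
  have hgb : ∀ t ∈ Icc a b, gUpper m α t ≤ gUpper m α b := fun t ht =>
    monotoneOn_gUpper hm hα (hJ t ht) (hJ b (right_mem_Icc.2 hab)) ht.2
  have hγg : ∀ t ∈ Icc a b, 0 < γ * gUpper m α t ∧ γ * gUpper m α t ≤ gUpper m α t :=
    fun t ht => ⟨mul_pos hγ0 (gUpper_pos hm hα (hJ t ht)),
      mul_le_of_le_one_left (gUpper_pos hm hα (hJ t ht)).le hγ1⟩
  obtain ⟨K, hK⟩ := lipschitzOnWith_Hrhs hm hα ha hb (gUpper m α b)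
  refine exists_hasDerivWithinAt_mem_Icc_of_lower_upper hab (fun y _ => ?_) hK
    (fun t ht => ((hg t ht).const_mul γ).hasDerivWithinAt) (fun t ht => (hg t ht).hasDerivWithinAt)
    (fun t ht => hlow t (hJ t ht))
    (fun t ht => (Hrhs_gUpper hm hα (hJ t ht)).trans_le (deriv_gUpper_nonneg hm hα (hJ t ht)))
    (fun t ht => ⟨by linarith [hγg t ht, hgb t ht], (hγg t ht).2.trans (hgb t ht)⟩)
    (fun t ht => ⟨by linarith [hγg t ht, hgb t ht], hgb t ht⟩)
    ⟨le_rfl, (hγg a (left_mem_Icc.2 hab)).2⟩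
  exact continuousOn_Hrhs.comp (continuousOn_id.prodMk continuousOn_const)
    fun t ht => ⟨hJ t ht, mem_univ _⟩

theorem squeezed_solution_le {a b a' b' : ℝ} {φ ψ : ℝ → ℝ} (ha : 0 < a) (hab : a ≤ b)
    (hb : b < tHat m α) (hsub : Icc a b ⊆ Icc a' b')
    (hφ : ∀ t ∈ Icc a b, HasDerivWithinAt φ (Hrhs m α t (φ t)) (Icc a b) t ∧
      φ t ∈ Icc (γ * gUpper m α t) (gUpper m α t))
    (hψ : ∀ t ∈ Icc a' b', HasDerivWithinAt ψ (Hrhs m α t (ψ t)) (Icc a' b') t ∧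
      ψ t ∈ Icc (γ * gUpper m α t) (gUpper m α t))
    (hφa : φ a = γ * gUpper m α a) :
    ∀ t ∈ Icc a b, φ t ≤ ψ t := by
  have hJ : ∀ t ∈ Icc a b, t ∈ Ioo 0 (tHat m α) := fun t ht =>
    ⟨ha.trans_le ht.1, ht.2.trans_lt hb⟩
  have hM : ∀ t ∈ Ico a b, ∀ y ∈ Icc (γ * gUpper m α t) (gUpper m α t),
      y ∈ Icc (-gUpper m α b) (gUpper m α b) := fun t ht y hy => by
    have htJ := hJ t (Ico_subset_Icc_self ht)
    have hgt := monotoneOn_gUpper hm hα htJ (hJ b ⟨ht.1.trans ht.2.le, le_rfl⟩) ht.2.le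
    have hγt := mul_pos hγ0 (gUpper_pos hm hα htJ)
    exact ⟨by linarith [hy.1, hy.2], hy.2.trans hgt⟩
  obtain ⟨K, hK⟩ := lipschitzOnWith_Hrhs hm hα ha hb (gUpper m α b)
  refine ODE_solution_le_of_mem_Icc (fun t ht => hK t (Ico_subset_Icc_self ht))
    (fun t ht => (hφ t ht).1) (fun t ht => (hψ t (hsub ht)).1.mono hsub)
    (fun t ht => hM t ht _ (hφ t (Ico_subset_Icc_self ht)).2)
    (fun t ht => hM t ht _ (hψ t (hsub (Ico_subset_Icc_self ht))).2)
    (hφa ▸ (hψ a (hsub (left_mem_Icc.2 hab))).2.1)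

theorem exists_monotone_approx (hγ1 : γ ≤ 1)
    (hlow : ∀ t ∈ Ioo 0 (tHat m α), γ * deriv (gUpper m α) t ≤ Hrhs m α t (γ * gUpper m α t)) :
    ∃ f : ℕ → ℝ → ℝ,
      (∀ n, ∀ t ∈ Ioo 0 (tHat m α), f n t ∈ Icc (γ * gUpper m α t) (gUpper m α t)) ∧
      (∀ t ∈ Ioo 0 (tHat m α), Monotone fun n => f n t) ∧
      ∀ t ∈ Ioo 0 (tHat m α), ∃ s ∈ 𝓝 t, ∃ C, ∀ᶠ n in atTop, ∀ r ∈ s,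
        HasDerivAt (f n) (Hrhs m α r (f n r)) r ∧ |Hrhs m α r (f n r)| ≤ C := by
  set T := tHat m α
  obtain ⟨τ, hτ, hτ0, hτlim⟩ := exists_seq_strictAnti_tendsto' (half_pos (tHat_pos hm hα))
  have hτT : ∀ n, τ n < T - τ n := fun n => by linarith [(hτ0 n).2]
  set I : ℕ → Set ℝ := fun n => Icc (τ n) (T - τ n)
  have hI : Monotone I := fun i j hij =>
    Icc_subset_Icc (hτ.antitone hij) (by linarith [hτ.antitone hij])
  have hIJ : ∀ n, I n ⊆ Ioo 0 T := fun n t ht =>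
    ⟨(hτ0 n).1.trans_le ht.1, by linarith [ht.2, (hτ0 n).1]⟩
  choose φ hφa hφ using fun n => exists_squeezed_solution_Icc hm hα hγ0 hγ1 hlow (hτ0 n).1
    (hτT n).le (by linarith [(hτ0 n).1] : T - τ n < T)
  -- extending `φ n` by the lower solution keeps the sequence monotone on all of `(0, t̂)`
  set f : ℕ → ℝ → ℝ := fun n t => if t ∈ I n then φ n t else γ * gUpper m α t
  have hf : ∀ n, ∀ t ∈ Ioo 0 T, f n t ∈ Icc (γ * gUpper m α t) (gUpper m α t) := fun n t ht => by
    by_cases h : t ∈ I n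
    · simpa [f, h] using (hφ n t h).2
    · simpa [f, h] using mul_le_of_le_one_left (gUpper_pos hm hα ht).le hγ1
  refine ⟨f, hf, fun t ht => monotone_nat_of_le_succ fun n => ?_, fun t ht => ?_⟩
  · by_cases h : t ∈ I n
    · simp only [f, if_pos h, if_pos (hI n.le_succ h)]
      exact squeezed_solution_le hm hα hγ0 (hτ0 n).1 (hτT n).le (by linarith [(hτ0 n).1])
        (hI n.le_succ) (hφ n) (hφ (n + 1)) (hφa n) t h
    · simpa [f, h] using (hf (n + 1) t ht).1
  · obtain ⟨N, hN⟩ := (hτlim.eventually (gt_mem_nhds (lt_min ht.1 (sub_pos.2 ht.2)))).exists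
    refine ⟨Ioo (τ N) (T - τ N), Ioo_mem_nhds (hN.trans_le (min_le_left _ _))
      (by linarith [hN.trans_le (min_le_right _ _)]),
      (m + α) * (1 + gUpper m α (T - τ N) ^ 2), ?_⟩
    filter_upwards [eventually_ge_atTop N] with n hn r hr
    have hrn : r ∈ Ioo (τ n) (T - τ n) :=
      ⟨(hτ.antitone hn).trans_lt hr.1, by linarith [hr.2, hτ.antitone hn]⟩
    have hfr : f n =ᶠ[𝓝 r] φ n := by
      filter_upwards [Ioo_mem_nhds hrn.1 hrn.2] with x hx
      exact if_pos (Ioo_subset_Icc_self hx)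
    rw [hfr.eq_of_nhds]
    refine ⟨((hφ n r (Ioo_subset_Icc_self hrn)).1.hasDerivAt
      (Icc_mem_nhds hrn.1 hrn.2)).congr_of_eventuallyEq hfr, ?_⟩
    have hrJ := hIJ N (Ioo_subset_Icc_self hr)
    have hφr := (hφ n r (Ioo_subset_Icc_self hrn)).2
    exact abs_Hrhs_le hm hα hrJ hr.2.le (by linarith [(hτ0 N).1])
      ⟨(mul_pos hγ0 (gUpper_pos hm hα hrJ)).le.trans hφr.1, hφr.2⟩

end Squeeze

/-- If `γ ∈ (0, 1 − 1/(m+α))` gives a lower solution `γ g_{m,α}` on `(0, t̂)`, then the ODE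
`w' = H_{m,α}(t, w)` has a solution `w` on `(0, t̂)` squeezed between `γ g_{m,α}` and
`g_{m,α}`, with `w(t) → 0` as `t → 0⁺` and `w(t) → +∞` as `t → t̂⁻`. -/
theorem solution_exists (m : ℕ) (hm : 2 ≤ m) (α : ℝ) (hα : 0 < α)
    (γ : ℝ) (hγ0 : 0 < γ) (hγ1 : γ < 1 - 1 / ((m : ℝ) + α))
    (hlow : ∀ t ∈ Set.Ioo 0 (tHat m α),
      γ * deriv (gUpper m α) t ≤ Hrhs m α t (γ * gUpper m α t)) :
    ∃ w : ℝ → ℝ,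
      (∀ t ∈ Set.Ioo 0 (tHat m α), HasDerivAt w (Hrhs m α t (w t)) t) ∧
      (∀ t ∈ Set.Ioo 0 (tHat m α),
        0 < γ * gUpper m α t ∧ γ * gUpper m α t ≤ w t ∧ w t ≤ gUpper m α t) ∧
      Filter.Tendsto w (nhdsWithin 0 (Set.Ioi 0)) (nhds 0) ∧
      Filter.Tendsto w (nhdsWithin (tHat m α) (Set.Iio (tHat m α))) Filter.atTop := by
  have hγ1' : γ ≤ 1 := by
    have : 0 < 1 / ((m : ℝ) + α) := by positivity
    linarith
  obtain ⟨f, hf, hmono, hsol⟩ := exists_monotone_approx hm hα hγ0 hγ1' hlow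
  set w : ℝ → ℝ := fun t => ⨆ n, f n t
  have hlim : ∀ t ∈ Ioo 0 (tHat m α), Tendsto (fun n => f n t) atTop (𝓝 (w t)) := fun t ht =>
    tendsto_atTop_ciSup (hmono t ht) ⟨gUpper m α t, forall_mem_range.2 fun n => (hf n t ht).2⟩
  have hw : ∀ t ∈ Ioo 0 (tHat m α), w t ∈ Icc (γ * gUpper m α t) (gUpper m α t) := fun t ht =>
    isClosed_Icc.mem_of_tendsto (hlim t ht) (Eventually.of_forall fun n => hf n t ht)
  have hJ0 : Ioo 0 (tHat m α) ∈ 𝓝[>] 0 := Ioo_mem_nhdsGT (tHat_pos hm hα)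
  refine ⟨w, fun t ht => ?_, fun t ht => ⟨mul_pos hγ0 (gUpper_pos hm hα ht), hw t ht⟩, ?_, ?_⟩
  · obtain ⟨s, hs, C, hC⟩ := hsol t ht
    exact hasDerivAt_of_tendsto_of_hasDerivAt hs
      (continuousOn_Hrhs.continuousAt ((isOpen_Ioo.prod isOpen_univ).mem_nhds ⟨ht, mem_univ _⟩))
      hC (eventually_of_mem (isOpen_Ioo.mem_nhds ht) hlim)
  · have hlow0 := (tendsto_gUpper_nhdsGT_zero hm hα).const_mul γ
    rw [mul_zero] at hlow0
    exact tendsto_of_tendsto_of_tendsto_of_le_of_le' hlow0 (tendsto_gUpper_nhdsGT_zero hm hα)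
      (eventually_of_mem hJ0 fun t ht => (hw t ht).1)
      (eventually_of_mem hJ0 fun t ht => (hw t ht).2)
  · exact tendsto_atTop_mono' _ (eventually_of_mem (Ioo_mem_nhdsLT (tHat_pos hm hα))
      fun t ht => (hw t ht).1) ((tendsto_gUpper_nhdsLT_tHat hm hα).const_mul_atTop hγ0)
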